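/- Reduction of zero-sum games to the ASV threshold: Given a zero-sum mean-payoff game G₀ with weight function w, form a bi-weighted game G with w₀ = w and w₁ ≡ 0 on every edge. Then for every vertex v, every rational c, and every ε > 0: Player 0 has a strategy in G₀ guaranteeing mean-payoff strictly greater than c against all Player 1 strategies if and only if ASV^ε(v) > c in G. -/

import Mathlib

open Filter

namespace MPG

variable {V : Type}

/-- A strategy maps histories (finite sequences of visited vertices, last = current) to a next vertex. -/
abbrev Strat (V : Type) := List V → V

/-- A bi-weighted mean-payoff game: finite directed graph with every vertex having a successor,
a partition of vertices between the players (`owner0`), and two weight functions. -/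
structure Game (V : Type) where
  E : V → V → Prop
  succ : ∀ v, ∃ v', E v v'
  owner0 : V → Bool
  w0 : V → V → ℝ
  w1 : V → V → ℝ

/-- A valid Player-0 strategy respects the edges at Player-0 vertices. -/
def Game.Valid0 (G : Game V) (σ : Strat V) : Prop :=
  ∀ (h : List V) (u : V), h.getLast? = some u → G.owner0 u = true → G.E u (σ h)

/-- A valid Player-1 strategy respects the edges at Player-1 vertices. -/
def Game.Valid1 (G : Game V) (σ : Strat V) : Prop :=
  ∀ (h : List V) (u : V), h.getLast? = some u → G.owner0 u = false → G.E u (σ h)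

/-- Finite prefixes of the unique outcome of a strategy profile from `v`. -/
def outPrefix (G : Game V) (σ0 σ1 : Strat V) (v : V) : ℕ → List V
  | 0 => [v]
  | n + 1 =>
      outPrefix G σ0 σ1 v n ++
        [if G.owner0 ((outPrefix G σ0 σ1 v n).getLastD v) then
            σ0 (outPrefix G σ0 σ1 v n)
          else σ1 (outPrefix G σ0 σ1 v n)]

/-- The unique outcome play `Out_v(σ0,σ1)`. -/
def outcome (G : Game V) (σ0 σ1 : Strat V) (v : V) (n : ℕ) : V :=
  (outPrefix G σ0 σ1 v n).getLastD v

/-- liminf mean-payoff of a play for a weight function. -/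
noncomputable def mp (w : V → V → ℝ) (π : ℕ → V) : ℝ :=
  Filter.liminf (fun k : ℕ => (∑ i ∈ Finset.range k, w (π i) (π (i + 1))) / (k : ℝ))
    Filter.atTop

/-- The ε-best-responses of Player 1 to a Player-0 strategy `σ0`. -/
def BR (G : Game V) (ε : ℝ) (σ0 : Strat V) : Set (Strat V) :=
  {σ1 | G.Valid1 σ1 ∧ ∀ (v : V) (σ1' : Strat V), G.Valid1 σ1' →
      mp G.w1 (outcome G σ0 σ1 v) > mp G.w1 (outcome G σ0 σ1' v) - ε}

/-- `ASV^ε(σ0)(v)`: value of `σ0` against ε-best responses. -/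
noncomputable def ASVe (G : Game V) (ε : ℝ) (σ0 : Strat V) (v : V) : ℝ :=
  sInf ((fun σ1 => mp G.w0 (outcome G σ0 σ1 v)) '' BR G ε σ0)

/-- `ASV^ε(v)`: the ε-adversarial Stackelberg value. -/
noncomputable def ASVeV (G : Game V) (ε : ℝ) (v : V) : ℝ :=
  sSup {x : ℝ | ∃ σ0 : Strat V, G.Valid0 σ0 ∧ x = ASVe G ε σ0 v}

/-- `ASV(σ0)(v) = sup_{ε>0} ASV^ε(σ0)(v)`. -/
noncomputable def ASVs (G : Game V) (σ0 : Strat V) (v : V) : ℝ :=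
  sSup {x : ℝ | ∃ ε : ℝ, 0 < ε ∧ x = ASVe G ε σ0 v}

/-- Zero-sum worst-case value of a Player-0 strategy. -/
noncomputable def Val (G : Game V) (σ0 : Strat V) (v : V) : ℝ :=
  sInf {x : ℝ | ∃ σ1 : Strat V, G.Valid1 σ1 ∧ x = mp G.w0 (outcome G σ0 σ1 v)}

/-- `H ∈ G^{±δ}`: same arena, every edge weight changed by strictly less than δ. -/
def Perturbed (G H : Game V) (δ : ℝ) : Prop :=
  H.E = G.E ∧ H.owner0 = G.owner0 ∧
    ∀ u v : V, G.E u v → |H.w0 u v - G.w0 u v| < δ ∧ |H.w1 u v - G.w1 u v| < δ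

/-- A finite-memory strategy: realizable by a finite-state machine reading the history. -/
def FinMem (σ : Strat V) : Prop :=
  ∃ (M : Type) (_ : Fintype M) (m0 : M) (upd : M → V → M) (o : M → V),
    ∀ h : List V, σ h = o (List.foldl upd m0 h)

/-- A vertex is `(c,d)^ε`-bad if Player 1 can enforce `MP₀ ≤ c ∧ MP₁ > d - ε` from it. -/
def Bad (G : Game V) (c d ε : ℝ) (v : V) : Prop :=
  ∃ σ1 : Strat V, G.Valid1 σ1 ∧ ∀ σ0 : Strat V, G.Valid0 σ0 →
    mp G.w0 (outcome G σ0 σ1 v) ≤ c ∧ mp G.w1 (outcome G σ0 σ1 v) > d - ε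

end MPG

/-
Player 0 guaranteeing a mean payoff `> c` against every strategy does not by itself give a
strategy whose worst-case value is `> c`: the infimum over Player 1's strategies could be `c`.
The gap comes from the first-cycle game, in which the play stops as soon as it closes a cycle and
Player 0 wins iff that cycle has mean weight `> c`. This is a finite game, so one of the players
wins it. Playing the winning strategy on the loop erasure of the history, every cycle that is ever
erased is won by that player. If this is Player 0, every erased cycle has mean at least `m`, the
least simple-cycle mean above `c`, so Player 0 secures `m > c`; if it is Player 1, every erased
cycle has mean at most `c`, and Player 1 holds the payoff to `≤ c`, which the hypothesis excludes.
Finally, since `w₁ ≡ 0`, every Player 1 strategy is an ε-best response, so `ASV^ε(v)` is the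
supremum of the worst-case values of Player 0's strategies.
-/

namespace MPG

variable {V : Type}

noncomputable def pathWeight (w : V → V → ℝ) : List V → ℝ
  | x :: y :: r => w x y + pathWeight w (y :: r)
  | _ => 0

@[simp] lemma pathWeight_nil (w : V → V → ℝ) : pathWeight w [] = 0 := rfl

@[simp] lemma pathWeight_singleton (w : V → V → ℝ) (x : V) : pathWeight w [x] = 0 := rfl

@[simp] lemma pathWeight_cons_cons (w : V → V → ℝ) (x y : V) (r : List V) :
    pathWeight w (x :: y :: r) = w x y + pathWeight w (y :: r) := rfl

lemma pathWeight_append_cons (w : V → V → ℝ) (l : List V) (a : V) (r : List V) :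
    pathWeight w (l ++ a :: r) = pathWeight w (l ++ [a]) + pathWeight w (a :: r) := by
  induction l with
  | nil => simp
  | cons x l ih => cases l <;> simp_all [add_assoc]

lemma pathWeight_concat (w : V → V → ℝ) {l : List V} {u : V} (hu : l.getLast? = some u)
    (y : V) : pathWeight w (l ++ [y]) = pathWeight w l + w u y := by
  obtain ⟨l', rfl⟩ : ∃ l', l = l' ++ [u] := ⟨l.dropLast, by
    rw [List.dropLast_append_getLast? _ hu]⟩
  rw [List.append_assoc, List.singleton_append, pathWeight_append_cons]
  simp

lemma pathWeight_neg (w : V → V → ℝ) (l : List V) :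
    pathWeight (fun u y => -w u y) l = -pathWeight w l := by
  induction l with
  | nil => simp
  | cons x l ih => cases l <;> simp_all; ring

lemma abs_pathWeight_le {w : V → V → ℝ} {W : ℝ} (hW : ∀ u y, |w u y| ≤ W) (l : List V) :
    |pathWeight w l| ≤ W * l.length := by
  induction l with
  | nil => simp
  | cons x l ih =>
    cases l with
    | nil => simpa using (abs_nonneg _).trans (hW x x)
    | cons y r =>
      rw [pathWeight_cons_cons, List.length_cons, Nat.cast_succ, mul_add_one]
      linarith [abs_add_le (w x y) (pathWeight w (y :: r)), hW x y]

section LoopErasure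

variable [DecidableEq V]

def cycleOf (p : List V) (y : V) : List V := p.dropWhile (· ≠ y)

def loopStep (p : List V) (y : V) : List V :=
  if y ∈ p then p.takeWhile (· ≠ y) ++ [y] else p ++ [y]

def loopErase (h : List V) : List V := h.foldl loopStep []

lemma loopStep_of_mem {p : List V} {y : V} (hy : y ∈ p) :
    ∃ q r, p = q ++ y :: r ∧ loopStep p y = q ++ [y] ∧ cycleOf p y = y :: r := by
  suffices ∃ r, cycleOf p y = y :: r by
    obtain ⟨r, hr⟩ := this
    refine ⟨p.takeWhile (· ≠ y), r, ?_, if_pos hy, hr⟩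
    rw [← hr, cycleOf, List.takeWhile_append_dropWhile]
  induction p with
  | nil => simp at hy
  | cons a p ih =>
    by_cases ha : a = y
    · exact ⟨p, by simp [cycleOf, ha]⟩
    · simpa [cycleOf, List.dropWhile_cons, ha] using ih (by simpa [Ne.symm ha] using hy)

lemma loopStep_of_not_mem {p : List V} {y : V} (hy : y ∉ p) : loopStep p y = p ++ [y] :=
  if_neg hy

@[simp] lemma loopErase_concat (h : List V) (y : V) :
    loopErase (h ++ [y]) = loopStep (loopErase h) y := by
  simp [loopErase]

@[simp] lemma loopErase_singleton (v : V) : loopErase [v] = [v] := by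
  simp [loopErase, loopStep]

lemma getLast?_loopErase {h : List V} {u : V} (hu : h.getLast? = some u) :
    (loopErase h).getLast? = some u := by
  rw [← List.dropLast_append_getLast? _ hu, loopErase_concat, loopStep]
  split_ifs <;> simp

lemma nodup_loopErase (h : List V) : (loopErase h).Nodup := by
  induction h using List.reverseRecOn with
  | nil => simp [loopErase]
  | append_singleton h y ih =>
    rw [loopErase_concat]
    by_cases hy : y ∈ loopErase h
    · obtain ⟨q, r, hqr, hstep, -⟩ := loopStep_of_mem hy
      rw [hstep]
      rw [hqr] at ih
      exact ih.sublist (by simp)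
    · rw [loopStep_of_not_mem hy]
      exact ih.append (by simp) (by simpa using hy)

/-- Every loop erased from `h` so far had mean weight at least `m`. -/
def LoopsAtLeast (w : V → V → ℝ) (m : ℝ) (h : List V) : Prop :=
  pathWeight w (loopErase h) + m * ((h.length : ℝ) - (loopErase h).length) ≤ pathWeight w h

lemma LoopsAtLeast.concat {w : V → V → ℝ} {m : ℝ} {h : List V} {u y : V}
    (hb : LoopsAtLeast w m h) (hu : h.getLast? = some u)
    (hy : y ∈ loopErase h →
      m * (cycleOf (loopErase h) y).length ≤ pathWeight w (cycleOf (loopErase h) y ++ [y])) :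
    LoopsAtLeast w m (h ++ [y]) := by
  have hpu := getLast?_loopErase hu
  unfold LoopsAtLeast at hb ⊢
  rw [loopErase_concat, pathWeight_concat w hu]
  by_cases hmem : y ∈ loopErase h
  · obtain ⟨q, r, hqr, hstep, hcyc⟩ := loopStep_of_mem hmem
    have hsplit := pathWeight_concat w hpu y
    rw [hqr, List.append_assoc, List.cons_append, pathWeight_append_cons] at hsplit
    have hc := hy hmem
    rw [hcyc] at hc
    rw [hqr] at hb
    rw [hstep]
    simp only [List.length_append, List.length_cons, List.length_nil, Nat.cast_add,
      Nat.cast_one, List.cons_append] at hb hc hsplit ⊢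
    nlinarith
  · rw [loopStep_of_not_mem hmem, pathWeight_concat w hpu]
    simp only [List.length_append, List.length_cons, List.length_nil, Nat.cast_add,
      Nat.cast_one]
    linarith

end LoopErasure

section FirstCycleGame

variable (E : V → V → Prop) (mine : V → Bool) (Good : List V → V → Prop)

/-- The player owning the vertices where `mine` holds wins the first-cycle game from the simple
path `p`: the play extends `p` along `E` until it closes a cycle by returning to some `y ∈ p`,
and that player wins iff `Good p y`. -/
inductive FirstCycleWin : List V → Prop
  | move {p : List V} {u : V} (hu : p.getLast? = some u) (hmine : mine u = true) (y : V)
      (hy : E u y) (hcyc : y ∈ p → Good p y) (hext : y ∉ p → FirstCycleWin (p ++ [y])) :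
      FirstCycleWin p
  | wait {p : List V} {u : V} (hu : p.getLast? = some u) (hmine : mine u = false)
      (hcyc : ∀ y, E u y → y ∈ p → Good p y)
      (hext : ∀ y, E u y → y ∉ p → FirstCycleWin (p ++ [y])) :
      FirstCycleWin p

variable {E mine Good}

theorem FirstCycleWin.of_not_opponent [Fintype V] {p : List V} (hp : p ≠ []) (hnd : p.Nodup)
    (h : ¬ FirstCycleWin E (fun u => !mine u) (fun p y => ¬ Good p y) p) :
    FirstCycleWin E mine Good p := by
  have hu := List.getLast?_eq_some_getLast hp
  have ih : ∀ y, y ∉ p →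
      ¬ FirstCycleWin E (fun u => !mine u) (fun p y => ¬ Good p y) (p ++ [y]) →
      FirstCycleWin E mine Good (p ++ [y]) := fun y hy h' =>
    have hnd' := hnd.append (List.nodup_singleton y) (by simpa using hy)
    have : p.length < Fintype.card V := by simpa using hnd'.length_le_card
    of_not_opponent (by simp) hnd' h'
  cases hm : mine (p.getLast hp)
  · refine .wait hu hm (fun y hy hyp => ?_) (fun y hy hyp => ih y hyp fun h' => ?_)
    · by_contra hg
      exact h (.move hu (by simp [hm]) y hy (fun _ => hg) (absurd hyp ·))
    · exact h (.move hu (by simp [hm]) y hy (absurd · hyp) fun _ => h')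
  · by_contra hno
    refine h (.wait hu (by simp [hm]) (fun y hy hyp hg => ?_) (fun y hy hyp => ?_))
    · exact hno (.move hu hm y hy (fun _ => hg) (absurd hyp ·))
    · by_contra h'
      exact hno (.move hu hm y hy (absurd · hyp) fun _ => ih y hyp h')
termination_by Fintype.card V - p.length

variable [DecidableEq V]

variable (E mine Good) in
def FirstCycleMove (p : List V) (y : V) : Prop :=
  (y ∈ p → Good p y) ∧ (y ∉ p → FirstCycleWin E mine Good (p ++ [y]))

variable (E mine Good) in
open Classical in
noncomputable def firstCycleStrat (d : Strat V) : Strat V := fun h =>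
  if hx : ∃ y u, h.getLast? = some u ∧ E u y ∧ FirstCycleMove E mine Good (loopErase h) y
  then hx.choose else d h

lemma firstCycleStrat_edge {d : Strat V} (hd : ∀ h u, h.getLast? = some u → E u (d h))
    {h : List V} {u : V} (hu : h.getLast? = some u) : E u (firstCycleStrat E mine Good d h) := by
  unfold firstCycleStrat
  split_ifs with hx
  · obtain ⟨u', hu', hE, -⟩ := hx.choose_spec
    rwa [Option.some_inj.mp (hu.symm.trans hu')]
  · exact hd h u hu

/-- Prefixes are needed because popping a cycle leaves a prefix of the old loop erasure. -/
lemma FirstCycleWin.step {d : Strat V} {h : List V} {u y : V}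
    (hp : ∀ q, q <+: loopErase h → q ≠ [] → FirstCycleWin E mine Good q)
    (hu : h.getLast? = some u)
    (hy : if mine u then y = firstCycleStrat E mine Good d h else E u y) :
    (y ∈ loopErase h → Good (loopErase h) y) ∧
      ∀ q, q <+: loopErase (h ++ [y]) → q ≠ [] → FirstCycleWin E mine Good q := by
  have hpu := getLast?_loopErase hu
  have hmove : FirstCycleMove E mine Good (loopErase h) y := by
    cases hp _ List.prefix_rfl (by simp [← List.getLast?_isSome, hpu]) with
    | move hu' hmine y' hy' hcyc hext =>
      obtain rfl := Option.some_inj.mp (hu'.symm.trans hpu)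
      have hx : ∃ y u, h.getLast? = some u ∧ E u y ∧
          FirstCycleMove E mine Good (loopErase h) y := ⟨y', _, hu, hy', hcyc, hext⟩
      rw [if_pos hmine, firstCycleStrat, dif_pos hx] at hy
      obtain ⟨-, -, -, hmv⟩ := hx.choose_spec
      rwa [hy]
    | wait hu' hmine hcyc hext =>
      obtain rfl := Option.some_inj.mp (hu'.symm.trans hpu)
      rw [if_neg (by simp [hmine])] at hy
      exact ⟨hcyc y hy, hext y hy⟩
  refine ⟨hmove.1, fun q hq hq0 => ?_⟩
  rw [loopErase_concat] at hq
  by_cases hmem : y ∈ loopErase h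
  · obtain ⟨a, r, hqr, hstep, -⟩ := loopStep_of_mem hmem
    rw [hstep] at hq
    exact hp q (hq.trans (by rw [hqr]; simp)) hq0
  · rw [loopStep_of_not_mem hmem, List.prefix_concat_iff] at hq
    rcases hq with rfl | hq
    · exact hmove.2 hmem
    · exact hp q hq hq0

end FirstCycleGame

section Plays

variable (H : Game V) (σ0 σ1 : Strat V) (v : V)

lemma getLast?_outPrefix (t : ℕ) :
    (outPrefix H σ0 σ1 v t).getLast? = some (outcome H σ0 σ1 v t) := by
  cases t <;> simp [outPrefix, outcome]

lemma outcome_succ (t : ℕ) :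
    outcome H σ0 σ1 v (t + 1) = if H.owner0 (outcome H σ0 σ1 v t)
      then σ0 (outPrefix H σ0 σ1 v t) else σ1 (outPrefix H σ0 σ1 v t) := by
  simp [outcome, outPrefix]

lemma outPrefix_succ (t : ℕ) :
    outPrefix H σ0 σ1 v (t + 1) = outPrefix H σ0 σ1 v t ++ [outcome H σ0 σ1 v (t + 1)] := by
  rw [outcome_succ]
  simp [outPrefix, outcome]

lemma length_outPrefix (t : ℕ) : (outPrefix H σ0 σ1 v t).length = t + 1 := by
  induction t with
  | zero => rfl
  | succ t ih => simp [outPrefix_succ, ih]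

lemma sum_range_eq_pathWeight_outPrefix (w : V → V → ℝ) (k : ℕ) :
    ∑ i ∈ Finset.range k, w (outcome H σ0 σ1 v i) (outcome H σ0 σ1 v (i + 1))
      = pathWeight w (outPrefix H σ0 σ1 v k) := by
  induction k with
  | zero => simp [outPrefix]
  | succ k ih =>
    rw [Finset.sum_range_succ, ih, outPrefix_succ,
      pathWeight_concat w (getLast?_outPrefix H σ0 σ1 v k)]

end Plays

lemma outcome_congr {G G' : Game V} (hown : G.owner0 = G'.owner0) : outcome G = outcome G' := by
  suffices outPrefix G = outPrefix G' by funext σ0 σ1 v t; simp [outcome, this]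
  funext σ0 σ1 v t
  induction t with
  | zero => rfl
  | succ t ih => simp [outPrefix, ih, hown]

lemma Game.Valid1.follows {H : Game V} {σ1 : Strat V} (hσ1 : H.Valid1 σ1) (σ0 : Strat V)
    (v : V) (t : ℕ) :
    if H.owner0 (outcome H σ0 σ1 v t) then
      outcome H σ0 σ1 v (t + 1) = σ0 (outPrefix H σ0 σ1 v t)
    else H.E (outcome H σ0 σ1 v t) (outcome H σ0 σ1 v (t + 1)) := by
  rw [outcome_succ]
  cases h : H.owner0 (outcome H σ0 σ1 v t)
  · simpa using hσ1 _ _ (getLast?_outPrefix H σ0 σ1 v t) h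
  · simp

lemma Game.Valid0.follows {H : Game V} {σ0 : Strat V} (hσ0 : H.Valid0 σ0) (σ1 : Strat V)
    (v : V) (t : ℕ) :
    if !H.owner0 (outcome H σ0 σ1 v t) then
      outcome H σ0 σ1 v (t + 1) = σ1 (outPrefix H σ0 σ1 v t)
    else H.E (outcome H σ0 σ1 v t) (outcome H σ0 σ1 v (t + 1)) := by
  rw [outcome_succ]
  cases h : H.owner0 (outcome H σ0 σ1 v t)
  · simp
  · simpa using hσ0 _ _ (getLast?_outPrefix H σ0 σ1 v t) h

noncomputable def succStrat (H : Game V) (v : V) : Strat V :=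
  fun h => (H.succ (h.getLastD v)).choose

lemma succStrat_edge (H : Game V) (v : V) {h : List V} {u : V} (hu : h.getLast? = some u) :
    H.E u (succStrat H v h) := by
  simpa [succStrat, List.getLastD_eq_getLast?, hu] using (H.succ u).choose_spec

section Accounting

variable {H : Game V} {σ0 σ1 : Strat V} {v : V} [DecidableEq V]

lemma FirstCycleWin.good_of_follows {E : V → V → Prop} {mine : V → Bool}
    {Good : List V → V → Prop} {d : Strat V} (hw : FirstCycleWin E mine Good [v])
    (hfollow : ∀ t, if mine (outcome H σ0 σ1 v t)
      then outcome H σ0 σ1 v (t + 1) = firstCycleStrat E mine Good d (outPrefix H σ0 σ1 v t)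
      else E (outcome H σ0 σ1 v t) (outcome H σ0 σ1 v (t + 1))) (t : ℕ) :
    outcome H σ0 σ1 v (t + 1) ∈ loopErase (outPrefix H σ0 σ1 v t) →
      Good (loopErase (outPrefix H σ0 σ1 v t)) (outcome H σ0 σ1 v (t + 1)) := by
  have hinv : ∀ t, ∀ q, q <+: loopErase (outPrefix H σ0 σ1 v t) → q ≠ [] →
      FirstCycleWin E mine Good q := by
    intro t
    induction t with
    | zero =>
      intro q hq hq0
      rcases (List.prefix_concat_iff (l₂ := []) (a := v)).mp (by simpa [outPrefix] using hq)
        with rfl | hq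
      · exact hw
      · exact absurd (List.prefix_nil.mp hq) hq0
    | succ t ih =>
      rw [outPrefix_succ]
      exact (FirstCycleWin.step ih (getLast?_outPrefix H σ0 σ1 v t) (hfollow t)).2
  exact (FirstCycleWin.step (hinv t) (getLast?_outPrefix H σ0 σ1 v t) (hfollow t)).1

lemma loopsAtLeast_outPrefix {w : V → V → ℝ} {m : ℝ}
    (hcyc : ∀ t, outcome H σ0 σ1 v (t + 1) ∈ loopErase (outPrefix H σ0 σ1 v t) →
      m * (cycleOf (loopErase (outPrefix H σ0 σ1 v t)) (outcome H σ0 σ1 v (t + 1))).length ≤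
        pathWeight w (cycleOf (loopErase (outPrefix H σ0 σ1 v t)) (outcome H σ0 σ1 v (t + 1))
          ++ [outcome H σ0 σ1 v (t + 1)]))
    (t : ℕ) : LoopsAtLeast w m (outPrefix H σ0 σ1 v t) := by
  induction t with
  | zero => simp [LoopsAtLeast, outPrefix]
  | succ t ih =>
    rw [outPrefix_succ]
    exact ih.concat (getLast?_outPrefix H σ0 σ1 v t) (hcyc t)

lemma LoopsAtLeast.sum_ge [Fintype V] {w : V → V → ℝ} {m W : ℝ}
    (hW : ∀ u y, |w u y| ≤ W) {k : ℕ} (hb : LoopsAtLeast w m (outPrefix H σ0 σ1 v k)) :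
    m * k - (|m| + W) * Fintype.card V ≤
      ∑ i ∈ Finset.range k, w (outcome H σ0 σ1 v i) (outcome H σ0 σ1 v (i + 1)) := by
  set p := loopErase (outPrefix H σ0 σ1 v k)
  have hp_card : (p.length : ℝ) ≤ Fintype.card V := by
    exact_mod_cast (nodup_loopErase _).length_le_card
  have hp_pos : (1 : ℝ) ≤ p.length := by
    have := getLast?_loopErase (getLast?_outPrefix H σ0 σ1 v k)
    exact_mod_cast List.length_pos_iff.mpr (by rintro h; simp [p, h] at this)
  have hpw := abs_le.mp ((abs_pathWeight_le hW p).trans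
    (mul_le_mul_of_nonneg_left hp_card ((abs_nonneg _).trans (hW v v))))
  have hm : -(|m| * Fintype.card V) ≤ m * (1 - p.length) := by
    have := neg_abs_le (m * (1 - p.length))
    rw [abs_mul, abs_of_nonpos (a := 1 - (p.length : ℝ)) (by linarith)] at this
    nlinarith [abs_nonneg m]
  have hb' : pathWeight w p + m * ((k : ℝ) + 1 - p.length) ≤
      pathWeight w (outPrefix H σ0 σ1 v k) := by
    simpa [LoopsAtLeast, length_outPrefix] using hb
  rw [sum_range_eq_pathWeight_outPrefix]
  linarith

end Accounting

lemma exists_abs_le [Finite V] (w : V → V → ℝ) : ∃ W, ∀ u y, |w u y| ≤ W := by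
  obtain ⟨W, hW⟩ := Finite.exists_le fun e : V × V => |w e.1 e.2|
  exact ⟨W, fun u y => hW (u, y)⟩

section MeanPayoff

variable {w : V → V → ℝ} {W : ℝ} {π : ℕ → V}

lemma abs_mean_le (hW : ∀ u y, |w u y| ≤ W) (k : ℕ) :
    |(∑ i ∈ Finset.range k, w (π i) (π (i + 1))) / k| ≤ W := by
  have hW0 : 0 ≤ W := (abs_nonneg _).trans (hW (π 0) (π 0))
  rcases k.eq_zero_or_pos with rfl | hk
  · simpa using hW0
  rw [abs_div, Nat.abs_cast, div_le_iff₀ (by exact_mod_cast hk)]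
  calc |∑ i ∈ Finset.range k, w (π i) (π (i + 1))|
      ≤ ∑ i ∈ Finset.range k, |w (π i) (π (i + 1))| := Finset.abs_sum_le_sum_abs _ _
    _ ≤ ∑ _i ∈ Finset.range k, W := Finset.sum_le_sum fun i _ => hW _ _
    _ = W * k := by simp [mul_comm]

lemma le_mp_of_sum_ge {m K : ℝ} (hW : ∀ u y, |w u y| ≤ W)
    (h : ∀ k : ℕ, m * k - K ≤ ∑ i ∈ Finset.range k, w (π i) (π (i + 1))) :
    m ≤ mp w π := by
  have hlim : Tendsto (fun k : ℕ => m - K / k) atTop (nhds m) := by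
    simpa using tendsto_const_nhds.sub (tendsto_const_div_atTop_nhds_zero_nat K)
  rw [mp, ← hlim.liminf_eq]
  refine liminf_le_liminf ?_ hlim.isBoundedUnder_ge
    (isCoboundedUnder_ge_of_le atTop fun k => (abs_le.mp (abs_mean_le hW k)).2)
  filter_upwards [eventually_gt_atTop 0] with k hk
  rw [le_div_iff₀ (by exact_mod_cast hk), sub_mul, div_mul_cancel₀ _ (by positivity)]
  exact h k

lemma mp_le_of_sum_le {c K : ℝ} (hW : ∀ u y, |w u y| ≤ W)
    (h : ∀ k : ℕ, ∑ i ∈ Finset.range k, w (π i) (π (i + 1)) ≤ c * k + K) :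
    mp w π ≤ c := by
  have hlim : Tendsto (fun k : ℕ => c + K / k) atTop (nhds c) := by
    simpa using tendsto_const_nhds.add (tendsto_const_div_atTop_nhds_zero_nat K)
  rw [mp, ← hlim.liminf_eq]
  refine liminf_le_liminf ?_
    (isBoundedUnder_of ⟨-W, fun k => (abs_le.mp (abs_mean_le hW k)).1⟩)
    hlim.isBoundedUnder_le.isCoboundedUnder_ge
  filter_upwards [eventually_gt_atTop 0] with k hk
  rw [div_le_iff₀ (by exact_mod_cast hk), add_mul, div_mul_cancel₀ _ (by positivity)]
  exact h k

lemma abs_mp_le (hW : ∀ u y, |w u y| ≤ W) (π : ℕ → V) : |mp w π| ≤ W := by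
  have hsum k := abs_le.mp ((abs_mean_le (π := π) hW k))
  refine abs_le.mpr
    ⟨le_mp_of_sum_ge (K := 0) hW fun k => ?_, mp_le_of_sum_le (K := 0) hW fun k => ?_⟩
  all_goals
    rcases k.eq_zero_or_pos with rfl | hk
    · simp
    have := hsum k
    rw [le_div_iff₀ (by exact_mod_cast hk), div_le_iff₀ (by exact_mod_cast hk)] at this
    linarith

lemma mp_eq_zero (hw : ∀ u y, w u y = 0) (π : ℕ → V) : mp w π = 0 := by
  simp [mp, hw]

end MeanPayoff

lemma exists_gt_forall_le_of_lt {α : Type*} [LinearOrder α] [NoMaxOrder α] {s : Set α}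
    (hs : s.Finite) (c : α) : ∃ m, c < m ∧ ∀ x ∈ s, c < x → m ≤ x := by
  obtain ⟨c', hc'⟩ := exists_gt c
  obtain ⟨m, hm, hmin⟩ := Set.exists_min_image (insert c' {x ∈ s | c < x}) id
    ((hs.sep _).insert c') (Set.insert_nonempty _ _)
  refine ⟨m, ?_, fun x hx hcx => hmin x (Set.mem_insert_of_mem _ ⟨hx, hcx⟩)⟩
  rcases hm with rfl | hm
  exacts [hc', hm.2]

def ClosesCycleAbove [DecidableEq V] (w : V → V → ℝ) (c : ℝ) (p : List V) (y : V) : Prop :=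
  c * (cycleOf p y).length < pathWeight w (cycleOf p y ++ [y])

lemma exists_gt_cycle_mean_gap [Fintype V] [DecidableEq V] (w : V → V → ℝ) (c : ℝ) :
    ∃ m, c < m ∧ ∀ p y, p.Nodup → y ∈ p → ClosesCycleAbove w c p y →
      m * (cycleOf p y).length ≤ pathWeight w (cycleOf p y ++ [y]) := by
  have hfin : ((fun d : List V × V => pathWeight w (d.1 ++ [d.2]) / d.1.length) ''
      ({l | l.length ≤ Fintype.card V} ×ˢ Set.univ)).Finite :=
    ((List.finite_length_le V _).prod Set.finite_univ).image _
  obtain ⟨m, hcm, hm⟩ := exists_gt_forall_le_of_lt hfin c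
  refine ⟨m, hcm, fun p y hnd hy hcyc => ?_⟩
  obtain ⟨-, r, -, -, hr⟩ := loopStep_of_mem hy
  have hlen : (0 : ℝ) < (cycleOf p y).length := by rw [hr, List.length_cons]; positivity
  have hmem := Set.mem_image_of_mem
    (fun d : List V × V => pathWeight w (d.1 ++ [d.2]) / d.1.length)
    (Set.mk_mem_prod (t := Set.univ) (show cycleOf p y ∈ {l | l.length ≤ Fintype.card V} from
      ((List.dropWhile_sublist _).nodup hnd).length_le_card) (Set.mem_univ y))
  rw [← le_div_iff₀ hlen]
  exact hm _ hmem ((lt_div_iff₀ hlen).mpr hcyc)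

theorem exists_strat_ge_of_firstCycleWin [Fintype V] [DecidableEq V] {H : Game V} {v : V} {c : ℝ}
    (hw : FirstCycleWin H.E H.owner0 (ClosesCycleAbove H.w0 c) [v]) :
    ∃ m, c < m ∧ ∃ σ0, H.Valid0 σ0 ∧ ∀ σ1, H.Valid1 σ1 →
      m ≤ mp H.w0 (outcome H σ0 σ1 v) := by
  obtain ⟨m, hcm, hgap⟩ := exists_gt_cycle_mean_gap H.w0 c
  obtain ⟨W, hW⟩ := exists_abs_le H.w0
  set σ0 := firstCycleStrat H.E H.owner0 (ClosesCycleAbove H.w0 c) (succStrat H v)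
  refine ⟨m, hcm, σ0, fun h u hu _ => firstCycleStrat_edge (fun _ _ => succStrat_edge H v) hu,
    fun σ1 hσ1 => ?_⟩
  have hgood := hw.good_of_follows (hσ1.follows σ0 v)
  exact le_mp_of_sum_ge hW fun k => (loopsAtLeast_outPrefix
    (fun t ht => hgap _ _ (nodup_loopErase _) ht (hgood t ht)) k).sum_ge hW

theorem exists_strat_le_of_firstCycleWin [Fintype V] [DecidableEq V] {H : Game V} {v : V} {c : ℝ}
    (hw : FirstCycleWin H.E (fun u => !H.owner0 u) (fun p y => ¬ ClosesCycleAbove H.w0 c p y)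
      [v]) :
    ∃ σ1, H.Valid1 σ1 ∧ ∀ σ0, H.Valid0 σ0 → mp H.w0 (outcome H σ0 σ1 v) ≤ c := by
  obtain ⟨W, hW⟩ := exists_abs_le H.w0
  set σ1 := firstCycleStrat H.E (fun u => !H.owner0 u) (fun p y => ¬ ClosesCycleAbove H.w0 c p y)
    (succStrat H v)
  refine ⟨σ1, fun h u hu _ => firstCycleStrat_edge (fun _ _ => succStrat_edge H v) hu,
    fun σ0 hσ0 => ?_⟩
  have hgood := hw.good_of_follows (hσ0.follows σ1 v)
  have hneg := loopsAtLeast_outPrefix (w := fun u y => -H.w0 u y) (m := -c) fun t ht => by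
    have := hgood t ht
    rw [ClosesCycleAbove, not_lt] at this
    rw [pathWeight_neg]
    linarith
  refine mp_le_of_sum_le (K := (|c| + W) * Fintype.card V) hW fun k => ?_
  have := (hneg k).sum_ge (W := W) (by simpa using hW)
  rw [Finset.sum_neg_distrib, abs_neg] at this
  linarith

theorem exists_gt_forall_le_mp [Fintype V] {H : Game V} {v : V} {c : ℝ}
    (h : ∃ σ0, H.Valid0 σ0 ∧ ∀ σ1, H.Valid1 σ1 → c < mp H.w0 (outcome H σ0 σ1 v)) :
    ∃ m, c < m ∧ ∃ σ0, H.Valid0 σ0 ∧ ∀ σ1, H.Valid1 σ1 →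
      m ≤ mp H.w0 (outcome H σ0 σ1 v) := by
  classical
  by_cases hw :
    FirstCycleWin H.E (fun u => !H.owner0 u) (fun p y => ¬ ClosesCycleAbove H.w0 c p y) [v]
  · obtain ⟨σ1, hσ1, hle⟩ := exists_strat_le_of_firstCycleWin hw
    obtain ⟨σ0, hσ0, hgt⟩ := h
    exact absurd (hle σ0 hσ0) (hgt σ1 hσ1).not_ge
  · exact exists_strat_ge_of_firstCycleWin (FirstCycleWin.of_not_opponent (by simp) (by simp) hw)

section Values

variable {H : Game V} {σ0 : Strat V} {v : V}

lemma le_Val {m : ℝ} (h : ∀ σ1, H.Valid1 σ1 → m ≤ mp H.w0 (outcome H σ0 σ1 v)) :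
    m ≤ Val H σ0 v := by
  refine le_csInf ⟨_, succStrat H v, fun _ _ hu _ => succStrat_edge H v hu, rfl⟩ ?_
  rintro _ ⟨σ1, hσ1, rfl⟩
  exact h σ1 hσ1

variable [Fintype V]

lemma Val_le_mp {σ1 : Strat V} (hσ1 : H.Valid1 σ1) :
    Val H σ0 v ≤ mp H.w0 (outcome H σ0 σ1 v) := by
  obtain ⟨W, hW⟩ := exists_abs_le H.w0
  refine csInf_le ⟨-W, ?_⟩ ⟨σ1, hσ1, rfl⟩
  rintro _ ⟨σ1, -, rfl⟩
  exact (abs_le.mp (abs_mp_le hW _)).1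

theorem lt_sSup_Val_iff (c : ℝ) :
    c < sSup {x | ∃ σ0, H.Valid0 σ0 ∧ x = Val H σ0 v} ↔
      ∃ σ0, H.Valid0 σ0 ∧ ∀ σ1, H.Valid1 σ1 → c < mp H.w0 (outcome H σ0 σ1 v) := by
  constructor
  · intro hc
    have hne : {x | ∃ σ0, H.Valid0 σ0 ∧ x = Val H σ0 v}.Nonempty :=
      ⟨_, succStrat H v, fun _ _ hu _ => succStrat_edge H v hu, rfl⟩
    obtain ⟨_, ⟨σ0, hσ0, rfl⟩, hcσ⟩ := exists_lt_of_lt_csSup hne hc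
    exact ⟨σ0, hσ0, fun σ1 hσ1 => hcσ.trans_le (Val_le_mp hσ1)⟩
  · intro h
    obtain ⟨m, hcm, σ0, hσ0, hm⟩ := exists_gt_forall_le_mp h
    obtain ⟨W, hW⟩ := exists_abs_le H.w0
    refine hcm.trans_le ((le_Val hm).trans (le_csSup ⟨W, ?_⟩ ⟨σ0, hσ0, rfl⟩))
    rintro _ ⟨σ, -, rfl⟩
    exact (Val_le_mp (fun _ _ hu _ => succStrat_edge H v hu)).trans (abs_le.mp (abs_mp_le hW _)).2

end Values

lemma BR_eq_of_w1_eq_zero {G : Game V} (hw1 : ∀ u y, G.w1 u y = 0) {ε : ℝ} (hε : 0 < ε)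
    (σ0 : Strat V) : BR G ε σ0 = {σ1 | G.Valid1 σ1} := by
  ext σ1
  simp [BR, mp_eq_zero hw1, hε]

theorem ASVeV_eq_sSup_Val {G : Game V} (hw1 : ∀ u y, G.w1 u y = 0) {ε : ℝ} (hε : 0 < ε)
    (v : V) : ASVeV G ε v = sSup {x | ∃ σ0, G.Valid0 σ0 ∧ x = Val G σ0 v} := by
  simp only [ASVeV, ASVe, Val, BR_eq_of_w1_eq_zero hw1 hε, Set.image, Set.mem_ofPred_eq,
    eq_comm]

end MPG

theorem stmt17_general {V : Type} [Fintype V] (G0 G : MPG.Game V)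
    (hE : G.E = G0.E) (hown : G.owner0 = G0.owner0)
    (hw0 : G.w0 = G0.w0) (hw1 : ∀ u v, G.w1 u v = 0)
    (v : V) (c : ℚ) (ε : ℝ) (hε : 0 < ε) :
    (∃ σ0 : MPG.Strat V, G0.Valid0 σ0 ∧ ∀ σ1 : MPG.Strat V, G0.Valid1 σ1 →
        MPG.mp G0.w0 (MPG.outcome G0 σ0 σ1 v) > (c : ℝ)) ↔
      MPG.ASVeV G ε v > (c : ℝ) := by
  have hValid0 : G.Valid0 = G0.Valid0 := by
    funext σ
    simp only [MPG.Game.Valid0, hE, hown]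
  have hValid1 : G.Valid1 = G0.Valid1 := by
    funext σ
    simp only [MPG.Game.Valid1, hE, hown]
  rw [gt_iff_lt, MPG.ASVeV_eq_sSup_Val hw1 hε, MPG.lt_sSup_Val_iff, hValid0, hValid1, hw0,
    MPG.outcome_congr hown]

/-- reduction of zero-sum mean-payoff games to the ASV^ε threshold
problem: with `w₀ = w` and `w₁ ≡ 0`, Player 0 can guarantee mean-payoff > c in the
zero-sum game iff `ASV^ε(v) > c` in the bi-weighted game. -/
theorem stmt17 {V : Type} [Fintype V] (G0 G : MPG.Game V)
    (hzs : ∀ u v, G0.w1 u v = - G0.w0 u v)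
    (hE : G.E = G0.E) (hown : G.owner0 = G0.owner0)
    (hw0 : G.w0 = G0.w0) (hw1 : ∀ u v, G.w1 u v = 0)
    (v : V) (c : ℚ) (ε : ℝ) (hε : 0 < ε) :
    (∃ σ0 : MPG.Strat V, G0.Valid0 σ0 ∧ ∀ σ1 : MPG.Strat V, G0.Valid1 σ1 →
        MPG.mp G0.w0 (MPG.outcome G0 σ0 σ1 v) > (c : ℝ)) ↔
      MPG.ASVeV G ε v > (c : ℝ) :=
  stmt17_general G0 G hE hown hw0 hw1 v c ε hε
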